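/- With f_3^4 and f_4^4 as above, E[f_3^4 − f_4^4] = (l² − l)·γ_b⁴ + 3(l² − l)·γ_b²γ_ε², and hence γ_b⁴ = (E[f_3^4] − E[f_4^4])/(l(l−1)) − 3γ_b²γ_ε² for l ≥ 2. -/

import Mathlib

/-!
Expanding the product, `f₃⁴ - f₄⁴ = ∑_{j ≠ k} e_j³ e_k`. For `j ≠ k` the noise `ε_k` is centred
and independent of `e_j`, so `E[e_j³ e_k] = E[(b + ε_j)³ b]`; expanding binomially, independence
of the centred variables `b` and `ε_j` leaves `E[b⁴] + 3 E[b²] E[ε_j²]`. Summing over the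
`l(l - 1)` ordered pairs gives the identity, and dividing by `l(l - 1) ≠ 0` gives the formula.
-/

open MeasureTheory ProbabilityTheory Finset

theorem Finset.sum_mul_sum_sub_sum_mul {ι R : Type*} [CommRing R] [DecidableEq ι]
    (s : Finset ι) (f g : ι → R) :
    (∑ i ∈ s, f i) * (∑ i ∈ s, g i) - ∑ i ∈ s, f i * g i
      = ∑ i ∈ s, ∑ j ∈ s.erase i, f i * g j := by
  rw [sum_mul_sum, ← sum_sub_distrib]
  refine sum_congr rfl fun i hi => ?_
  rw [← sum_erase_add _ _ hi, add_sub_cancel_right]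

theorem pow_mul_pow_le_pow_add_pow {R : Type*} [Semiring R] [LinearOrder R] [IsOrderedRing R]
    {a b : R} (ha : 0 ≤ a) (hb : 0 ≤ b) (i j : ℕ) :
    a ^ i * b ^ j ≤ a ^ (i + j) + b ^ (i + j) := by
  rcases le_total a b with hab | hab
  · calc a ^ i * b ^ j ≤ b ^ i * b ^ j := by gcongr
      _ ≤ a ^ (i + j) + b ^ (i + j) := by
        rw [← pow_add]; exact le_add_of_nonneg_left (by positivity)
  · calc a ^ i * b ^ j ≤ a ^ i * a ^ j := by gcongr
      _ ≤ a ^ (i + j) + b ^ (i + j) := by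
        rw [← pow_add]; exact le_add_of_nonneg_right (by positivity)

section Integrability

variable {Ω : Type*} [MeasurableSpace Ω] {μ : Measure Ω} {X Y : Ω → ℝ} {n : ℕ}

theorem integrable_pow_mul_pow (hn : Even n) (hX : AEStronglyMeasurable X μ)
    (hY : AEStronglyMeasurable Y μ) (hXn : Integrable (fun ω => X ω ^ n) μ)
    (hYn : Integrable (fun ω => Y ω ^ n) μ) {i j : ℕ} (hij : i + j = n) :
    Integrable (fun ω => X ω ^ i * Y ω ^ j) μ := by
  refine (hXn.add hYn).mono' ((hX.pow i).mul (hY.pow j)) (ae_of_all _ fun ω => ?_)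
  simpa [abs_mul, abs_pow, ← hij, (hij ▸ hn).pow_abs] using
    pow_mul_pow_le_pow_add_pow (abs_nonneg (X ω)) (abs_nonneg (Y ω)) i j

theorem integrable_add_pow (hn : Even n) (hX : AEStronglyMeasurable X μ)
    (hY : AEStronglyMeasurable Y μ) (hXn : Integrable (fun ω => X ω ^ n) μ)
    (hYn : Integrable (fun ω => Y ω ^ n) μ) :
    Integrable (fun ω => (X ω + Y ω) ^ n) μ := by
  refine ((hXn.add hYn).const_mul (2 ^ (n - 1))).mono' ((hX.add hY).pow n)
    (ae_of_all _ fun ω => ?_)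
  calc ‖(X ω + Y ω) ^ n‖ = |X ω + Y ω| ^ n := by rw [Real.norm_eq_abs, abs_pow]
    _ ≤ (|X ω| + |Y ω|) ^ n := by gcongr; exact abs_add_le _ _
    _ ≤ 2 ^ (n - 1) * (|X ω| ^ n + |Y ω| ^ n) := add_pow_le (abs_nonneg _) (abs_nonneg _) n
    _ = _ := by rw [hn.pow_abs, hn.pow_abs]; rfl

theorem integrable_pow_three_mul (hX : AEStronglyMeasurable X μ) (hY : AEStronglyMeasurable Y μ)
    (hX4 : Integrable (fun ω => X ω ^ 4) μ) (hY4 : Integrable (fun ω => Y ω ^ 4) μ) :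
    Integrable (fun ω => X ω ^ 3 * Y ω) μ := by
  simpa using integrable_pow_mul_pow (by decide) hX hY hX4 hY4 (show 3 + 1 = 4 from rfl)

end Integrability

section Moments

variable {Ω : Type*} [MeasurableSpace Ω] {μ : Measure Ω} {X Y Z : Ω → ℝ}

theorem ProbabilityTheory.IndepFun.integral_pow_mul_pow (hXY : IndepFun X Y μ)
    (hX : AEStronglyMeasurable X μ) (hY : AEStronglyMeasurable Y μ) (i j : ℕ) :
    ∫ ω, X ω ^ i * Y ω ^ j ∂μ = (∫ ω, X ω ^ i ∂μ) * ∫ ω, Y ω ^ j ∂μ :=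
  (hXY.comp (measurable_id.pow_const i) (measurable_id.pow_const j)
    ).integral_fun_mul_eq_mul_integral (hX.pow i) (hY.pow j)

theorem ProbabilityTheory.IndepFun.integral_add_pow_mul_pow (hXY : IndepFun X Y μ)
    (hX : AEStronglyMeasurable X μ) (hY : AEStronglyMeasurable Y μ) {n m : ℕ} (hnm : Even (n + m))
    (hXnm : Integrable (fun ω => X ω ^ (n + m)) μ) (hYnm : Integrable (fun ω => Y ω ^ (n + m)) μ) :
    ∫ ω, (X ω + Y ω) ^ n * X ω ^ m ∂μ
      = ∑ k ∈ range (n + 1), (∫ ω, X ω ^ (k + m) ∂μ) * (∫ ω, Y ω ^ (n - k) ∂μ) * n.choose k := by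
  have hexpand : ∀ ω, (X ω + Y ω) ^ n * X ω ^ m
      = ∑ k ∈ range (n + 1), X ω ^ (k + m) * Y ω ^ (n - k) * n.choose k := by
    intro ω
    rw [add_pow, sum_mul]
    exact sum_congr rfl fun k _ => by ring
  simp_rw [hexpand]
  rw [integral_finsetSum _ fun k hk => (integrable_pow_mul_pow hnm hX hY hXnm hYnm
    (by rw [mem_range] at hk; omega)).mul_const _]
  exact sum_congr rfl fun k _ => by rw [integral_mul_const, hXY.integral_pow_mul_pow hX hY]

theorem ProbabilityTheory.IndepFun.integral_add_pow_three_mul_self [IsProbabilityMeasure μ]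
    (hXY : IndepFun X Y μ) (hX : AEStronglyMeasurable X μ) (hY : AEStronglyMeasurable Y μ)
    (hX4 : Integrable (fun ω => X ω ^ 4) μ) (hY4 : Integrable (fun ω => Y ω ^ 4) μ)
    (hXmean : ∫ ω, X ω ∂μ = 0) (hYmean : ∫ ω, Y ω ∂μ = 0) :
    ∫ ω, (X ω + Y ω) ^ 3 * X ω ∂μ = ∫ ω, X ω ^ 4 ∂μ + 3 * (∫ ω, X ω ^ 2 ∂μ) * ∫ ω, Y ω ^ 2 ∂μ := by
  have h := hXY.integral_add_pow_mul_pow hX hY (m := 1) (by decide) hX4 hY4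
  simp only [pow_one] at h
  rw [h]
  norm_num [sum_range_succ, hXmean, hYmean]
  ring

theorem integral_add_pow_three_mul_add [IsProbabilityMeasure μ]
    (hX : AEStronglyMeasurable X μ) (hY : AEStronglyMeasurable Y μ) (hZ : AEStronglyMeasurable Z μ)
    (hXY : IndepFun X Y μ) (hXYZ : IndepFun (fun ω => (X ω, Y ω)) Z μ)
    (hX4 : Integrable (fun ω => X ω ^ 4) μ) (hY4 : Integrable (fun ω => Y ω ^ 4) μ)
    (hZ4 : Integrable (fun ω => Z ω ^ 4) μ)
    (hXmean : ∫ ω, X ω ∂μ = 0) (hYmean : ∫ ω, Y ω ∂μ = 0) (hZmean : ∫ ω, Z ω ∂μ = 0) :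
    ∫ ω, (X ω + Y ω) ^ 3 * (X ω + Z ω) ∂μ
      = ∫ ω, X ω ^ 4 ∂μ + 3 * (∫ ω, X ω ^ 2 ∂μ) * ∫ ω, Y ω ^ 2 ∂μ := by
  have hS : AEStronglyMeasurable (fun ω => X ω + Y ω) μ := hX.add hY
  have hS4 := integrable_add_pow (by decide) hX hY hX4 hY4
  have hcross : ∫ ω, (X ω + Y ω) ^ 3 * Z ω ∂μ = 0 := by
    have hind := hXYZ.comp (φ := fun p : ℝ × ℝ => (p.1 + p.2) ^ 3) (by fun_prop) measurable_id
    calc ∫ ω, (X ω + Y ω) ^ 3 * Z ω ∂μ = (∫ ω, (X ω + Y ω) ^ 3 ∂μ) * ∫ ω, Z ω ∂μ :=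
          hind.integral_fun_mul_eq_mul_integral (hS.pow 3) hZ
      _ = 0 := by rw [hZmean, mul_zero]
  simp_rw [mul_add]
  rw [integral_add (integrable_pow_three_mul hS hX hS4 hX4)
    (integrable_pow_three_mul hS hZ hS4 hZ4), hcross, add_zero,
    hXY.integral_add_pow_three_mul_self hX hY hX4 hY4 hXmean hYmean]

theorem integrable_sum_pow_three_mul_sum {ι : Type*} [Fintype ι] {e : ι → Ω → ℝ}
    (he : ∀ j, AEStronglyMeasurable (e j) μ) (he4 : ∀ j, Integrable (fun ω => e j ω ^ 4) μ) :
    Integrable (fun ω => (∑ j, e j ω ^ 3) * ∑ j, e j ω) μ := by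
  simp_rw [sum_mul_sum]
  exact integrable_finsetSum _ fun j _ => integrable_finsetSum _ fun k _ =>
    integrable_pow_three_mul (he j) (he k) (he4 j) (he4 k)

theorem integral_sum_pow_three_mul_sum_sub_sum_pow_four {ι : Type*} [Fintype ι]
    {e : ι → Ω → ℝ} (he : ∀ j, AEStronglyMeasurable (e j) μ)
    (he4 : ∀ j, Integrable (fun ω => e j ω ^ 4) μ) {c : ℝ}
    (hc : ∀ j k, j ≠ k → ∫ ω, e j ω ^ 3 * e k ω ∂μ = c) :
    ∫ ω, ((∑ j, e j ω ^ 3) * (∑ j, e j ω) - ∑ j, e j ω ^ 4) ∂μ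
      = ((Fintype.card ι : ℝ) ^ 2 - Fintype.card ι) * c := by
  classical
  have hexpand : ∀ ω, (∑ j, e j ω ^ 3) * (∑ j, e j ω) - ∑ j, e j ω ^ 4
      = ∑ j, ∑ k ∈ univ.erase j, e j ω ^ 3 * e k ω := by
    intro ω
    simp_rw [← sum_mul_sum_sub_sum_mul, ← pow_succ]
  have hint : ∀ j k, Integrable (fun ω => e j ω ^ 3 * e k ω) μ := fun j k =>
    integrable_pow_three_mul (he j) (he k) (he4 j) (he4 k)
  simp_rw [hexpand]
  rw [integral_finsetSum _ fun j _ => integrable_finsetSum _ fun k _ => hint j k]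
  calc ∑ j, ∫ ω, ∑ k ∈ univ.erase j, e j ω ^ 3 * e k ω ∂μ
        = ∑ j : ι, ∑ k ∈ univ.erase j, c := by
        refine sum_congr rfl fun j _ => ?_
        rw [integral_finsetSum _ fun k _ => hint j k]
        exact sum_congr rfl fun k hk => hc j k (ne_of_mem_erase hk).symm
    _ = _ := by
        simp only [sum_erase_eq_sub (mem_univ _), sum_const, card_univ, nsmul_eq_mul]
        ring

end Moments

theorem fourth_moment_b_from_f34_f44_general
    {l : ℕ} (hl : 2 ≤ l)
    {Ω : Type*} [MeasureSpace Ω] [IsProbabilityMeasure (ℙ : Measure Ω)]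
    (b : Ω → ℝ) (ε : Fin l → Ω → ℝ)
    (hbmeas : Measurable b) (hεmeas : ∀ j, Measurable (ε j))
    (hindep : ProbabilityTheory.iIndepFun
      (fun i : Option (Fin l) => Option.elim i b ε) ℙ)
    (hεmean : ∀ j, ∫ ω, ε j ω = 0)
    (hεint4 : ∀ j, Integrable (fun ω => (ε j ω) ^ 4) ℙ)
    (hbint4 : Integrable (fun ω => (b ω) ^ 4) ℙ)
    (hbmean : ∫ ω, b ω = 0)
    (γb2 γb4 γε2 : ℝ)
    (hb2 : ∫ ω, (b ω) ^ 2 = γb2) (hb4 : ∫ ω, (b ω) ^ 4 = γb4)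
    (hε2 : ∀ j, ∫ ω, (ε j ω) ^ 2 = γε2) :
    (∫ ω, ((∑ j, (b ω + ε j ω) ^ 3) * (∑ j, (b ω + ε j ω))
            - ∑ j, (b ω + ε j ω) ^ 4)
        = ((l : ℝ) ^ 2 - (l : ℝ)) * γb4
          + 3 * ((l : ℝ) ^ 2 - (l : ℝ)) * γb2 * γε2) ∧
    (γb4 = ((∫ ω, (∑ j, (b ω + ε j ω) ^ 3) * (∑ j, (b ω + ε j ω)))
              - ∫ ω, ∑ j, (b ω + ε j ω) ^ 4) / ((l : ℝ) * ((l : ℝ) - 1))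
            - 3 * γb2 * γε2) := by
  have hmeas : ∀ i, Measurable (Option.elim i b ε) := by
    rintro (_ | j)
    exacts [hbmeas, hεmeas j]
  have hb : AEStronglyMeasurable b ℙ := hbmeas.aestronglyMeasurable
  have hε : ∀ j, AEStronglyMeasurable (ε j) ℙ := fun j => (hεmeas j).aestronglyMeasurable
  have he : ∀ j, AEStronglyMeasurable (fun ω => b ω + ε j ω) ℙ := fun j => hb.add (hε j)
  have he4 := fun j => integrable_add_pow (by decide) hb (hε j) hbint4 (hεint4 j)
  have hpair : ∀ j k, j ≠ k →
      ∫ ω, (b ω + ε j ω) ^ 3 * (b ω + ε k ω) = γb4 + 3 * γb2 * γε2 := fun j k hjk => by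
    rw [← hb4, ← hb2, ← hε2 j]
    exact integral_add_pow_three_mul_add hb (hε j) (hε k)
      (hindep.indepFun (Option.some_ne_none j).symm)
      (hindep.indepFun_prodMk hmeas none (some j) (some k) (by simp) (by simpa using hjk))
      hbint4 (hεint4 j) (hεint4 k) hbmean (hεmean j) (hεmean k)
  have hdiff := integral_sum_pow_three_mul_sum_sub_sum_pow_four he he4 hpair
  rw [Fintype.card_fin] at hdiff
  refine ⟨by rw [hdiff]; ring, ?_⟩
  rw [← integral_sub (integrable_sum_pow_three_mul_sum he he4)
    (integrable_finsetSum _ fun j _ => he4 j), hdiff]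
  have hl2 : (2 : ℝ) ≤ l := by exact_mod_cast hl
  field_simp [show (l : ℝ) - 1 ≠ 0 by linarith]
  ring

/-- E[f_3^4 − f_4^4] identity and the resulting formula for γ_b⁴. -/
theorem fourth_moment_b_from_f34_f44
    {l : ℕ} (hl : 2 ≤ l)
    {Ω : Type*} [MeasureSpace Ω] [IsProbabilityMeasure (ℙ : Measure Ω)]
    (b : Ω → ℝ) (ε : Fin l → Ω → ℝ)
    (hbmeas : Measurable b) (hεmeas : ∀ j, Measurable (ε j))
    (hindep : ProbabilityTheory.iIndepFun
      (fun i : Option (Fin l) => Option.elim i b ε) ℙ)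
    (hident : ∀ j j' : Fin l, Measure.map (ε j) ℙ = Measure.map (ε j') ℙ)
    (hεmean : ∀ j, ∫ ω, ε j ω = 0)
    (hεint4 : ∀ j, Integrable (fun ω => (ε j ω) ^ 4) ℙ)
    (hbint4 : Integrable (fun ω => (b ω) ^ 4) ℙ)
    (hbmean : ∫ ω, b ω = 0)
    (γb2 γb4 γε2 : ℝ)
    (hb2 : ∫ ω, (b ω) ^ 2 = γb2) (hb4 : ∫ ω, (b ω) ^ 4 = γb4)
    (hε2 : ∀ j, ∫ ω, (ε j ω) ^ 2 = γε2) :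
    (∫ ω, ((∑ j, (b ω + ε j ω) ^ 3) * (∑ j, (b ω + ε j ω))
            - ∑ j, (b ω + ε j ω) ^ 4)
        = ((l : ℝ) ^ 2 - (l : ℝ)) * γb4
          + 3 * ((l : ℝ) ^ 2 - (l : ℝ)) * γb2 * γε2) ∧
    (γb4 = ((∫ ω, (∑ j, (b ω + ε j ω) ^ 3) * (∑ j, (b ω + ε j ω)))
              - ∫ ω, ∑ j, (b ω + ε j ω) ^ 4) / ((l : ℝ) * ((l : ℝ) - 1))
            - 3 * γb2 * γε2) :=
  fourth_moment_b_from_f34_f44_general hl b ε hbmeas hεmeas hindep hεmean hεint4 hbint4 hbmean γb2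
    γb4 γε2 hb2 hb4 hε2
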